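/- Let n ≥ 1 and let Ã be the symmetric (2n+2)×(2n+2) Seifert matrix above, with E⁺ the real eigenspace of the eigenvalue 2n-1. Then the set of integer vectors in E⁺, i.e., ℤ^{2n+2} ∩ E⁺, equals the set of integer multiples of w = e₁ + e_{2n+2}. -/

import Mathlib

/-!
Away from the first and last coordinates, row i of Ã reads v₁ - 2vᵢ - v_{2n+2}, so an
eigenvector for 2n - 1 has all its middle coordinates equal to (v₁ - v_{2n+2})/(2n+1).
Substituting this into the first row, which involves the total sum of the coordinates, gives
(4n² + 2n + 1)(v₁ - v_{2n+2}) = 0. Hence the real eigenspace is the line ℝw, and a point c • w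
is integral exactly when c = v₁ is an integer.
-/

open Matrix Finset

/-- The symmetrized Seifert matrix Ã of size (2n+2)×(2n+2) (0-indexed). -/
def Atilde (n : ℕ) : Matrix (Fin (2*n+2)) (Fin (2*n+2)) ℝ :=
  Matrix.of fun i j =>
    if i = j then -2
    else if ((i : ℕ) = 0 ∧ (j : ℕ) = 2*n+1) ∨ ((i : ℕ) = 2*n+1 ∧ (j : ℕ) = 0) then (2*n+1 : ℝ)
    else if (i : ℕ) = 0 ∨ (j : ℕ) = 0 then 1
    else if (i : ℕ) = 2*n+1 ∨ (j : ℕ) = 2*n+1 then -1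
    else 0

/-- The vector w = e₁ + e_{2n+2}. -/
def wvec (n : ℕ) : Fin (2*n+2) → ℝ :=
  fun i => if (i : ℕ) = 0 ∨ (i : ℕ) = 2*n+1 then 1 else 0

section

variable {n : ℕ}

theorem Atilde_mulVec_zero (v : Fin (2*n+2) → ℝ) :
    (Atilde n *ᵥ v) 0 = ∑ j, v j - 3 * v 0 + 2 * n * v (Fin.last _) := by
  have hrow : Atilde n 0 = 1 + Pi.single 0 (-3) + Pi.single (Fin.last _) (2 * n : ℝ) := by
    ext j
    simp only [Atilde, of_apply, Pi.add_apply, Pi.one_apply, Pi.single_apply, Fin.ext_iff,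
      Fin.val_zero, Fin.val_last, true_and, true_or]
    grind
  simp only [mulVec, hrow, add_dotProduct, single_dotProduct, one_dotProduct]
  ring

theorem Atilde_mulVec_of_ne {i : Fin (2*n+2)} (hi₀ : i ≠ 0) (hi : i ≠ Fin.last _)
    (v : Fin (2*n+2) → ℝ) : (Atilde n *ᵥ v) i = v 0 - 2 * v i - v (Fin.last _) := by
  have hrow : Atilde n i = Pi.single 0 1 + Pi.single i (-2) + Pi.single (Fin.last _) (-1) := by
    ext j
    simp only [ne_eq, Fin.ext_iff, Fin.val_zero, Fin.val_last] at hi₀ hi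
    simp only [Atilde, of_apply, Pi.add_apply, Pi.single_apply, Fin.ext_iff,
      Fin.val_zero, Fin.val_last]
    grind
  simp only [mulVec, hrow, add_dotProduct, single_dotProduct]
  ring

theorem wvec_eq_single_add_single : wvec n = Pi.single 0 1 + Pi.single (Fin.last _) 1 := by
  ext i
  simp only [wvec, Pi.add_apply, Pi.single_apply, Fin.ext_iff, Fin.val_zero, Fin.val_last]
  grind

theorem Atilde_mulVec_wvec : Atilde n *ᵥ wvec n = ((2 * n : ℝ) - 1) • wvec n := by
  ext i
  simp only [wvec_eq_single_add_single, mulVec_add, mulVec_single_one, Pi.add_apply,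
    Pi.smul_apply, smul_eq_mul, Pi.single_apply, col_apply, Atilde, of_apply, Fin.ext_iff,
    Fin.val_zero, Fin.val_last]
  grind

theorem eq_smul_wvec_of_Atilde_mulVec {v : Fin (2*n+2) → ℝ}
    (hv : Atilde n *ᵥ v = ((2 * n : ℝ) - 1) • v) : v = v 0 • wvec n := by
  set a := v 0
  set b := v (Fin.last _)
  have hmid : ∀ i, i ≠ 0 → i ≠ Fin.last _ → (2 * n + 1 : ℝ) * v i = a - b := by
    intro i hi₀ hi
    have hvi := congrFun hv i
    rw [Atilde_mulVec_of_ne hi₀ hi, Pi.smul_apply, smul_eq_mul] at hvi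
    linarith
  have hrow₀ : ∑ j, v j = (2 * n + 2) * a - 2 * n * b := by
    have h₀ := congrFun hv 0
    rw [Atilde_mulVec_zero, Pi.smul_apply, smul_eq_mul] at h₀
    linarith
  have hsum : (2 * n + 1 : ℝ) * ∑ j, v j = (2 * n + 1) * (a + b) + 2 * n * (a - b) := by
    -- each middle row says that the summand below vanishes
    have h := Fintype.sum_eq_add (f := fun j => (2 * n + 1 : ℝ) * v j - (a - b)) 0 (Fin.last _)
      Fin.last_pos.ne (fun j ⟨hj₀, hj⟩ => sub_eq_zero.2 (hmid j hj₀ hj))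
    simp only [sum_sub_distrib, ← mul_sum, sum_const, card_univ, Fintype.card_fin, nsmul_eq_mul,
      Nat.cast_add, Nat.cast_mul, Nat.cast_ofNat] at h
    linarith
  have hba : b = a := by
    have h : (4 * n ^ 2 + 2 * n + 1 : ℝ) * (a - b) = 0 := by
      linear_combination hsum - (2 * n + 1 : ℝ) * hrow₀
    have : (4 * n ^ 2 + 2 * n + 1 : ℝ) ≠ 0 := by positivity
    linarith [(mul_eq_zero.1 h).resolve_left this]
  ext i
  rw [wvec_eq_single_add_single]
  by_cases hi₀ : i = 0
  · subst hi₀; simp [a]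
  by_cases hi : i = Fin.last _
  · subst hi; simpa [hi₀] using hba
  · have hvi := hmid i hi₀ hi
    rw [hba, sub_self, mul_eq_zero] at hvi
    simpa [hi₀, hi] using hvi.resolve_left (by positivity)

theorem Atilde_mulVec_eq_smul_iff (v : Fin (2*n+2) → ℝ) :
    Atilde n *ᵥ v = ((2 * n : ℝ) - 1) • v ↔ ∃ c : ℝ, v = c • wvec n := by
  refine ⟨fun hv => ⟨v 0, eq_smul_wvec_of_Atilde_mulVec hv⟩, ?_⟩
  rintro ⟨c, rfl⟩
  rw [mulVec_smul, Atilde_mulVec_wvec, smul_comm]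

end

theorem stmt_8_general (n : ℕ) (x : Fin (2*n+2) → ℤ) :
    (Atilde n).mulVec (fun i => (x i : ℝ)) = ((2*n : ℝ) - 1) • (fun i => (x i : ℝ))
      ↔ ∃ c : ℤ, ∀ i, (x i : ℝ) = c • wvec n i := by
  rw [Atilde_mulVec_eq_smul_iff]
  constructor
  · rintro ⟨c, hc⟩
    have hc₀ : c = x 0 := by simpa [wvec_eq_single_add_single] using (congrFun hc 0).symm
    exact ⟨x 0, fun i => by simpa [hc₀] using congrFun hc i⟩
  · rintro ⟨c, hc⟩
    exact ⟨c, funext fun i => by simpa using hc i⟩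

/-- The integer points of the eigenspace E⁺ of eigenvalue 2n-1 are exactly the
integer multiples of w = e₁ + e_{2n+2}. -/
theorem stmt_8 (n : ℕ) (hn : 1 ≤ n) (x : Fin (2*n+2) → ℤ) :
    (Atilde n).mulVec (fun i => (x i : ℝ)) = ((2*n : ℝ) - 1) • (fun i => (x i : ℝ))
      ↔ ∃ c : ℤ, ∀ i, (x i : ℝ) = c • wvec n i :=
  stmt_8_general n x
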